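/- Let G be a locally compact group which is the union of a directed family {G_i} of open subgroups, each belonging to the class X. Then G belongs to X. -/

import Mathlib

open scoped Topology

/-- A continuous affine action of a topological group `G` on a topological `ℝ`-vector space. -/
structure AffineActionOn (G : Type*) [Group G] [TopologicalSpace G]
    (E : Type) [AddCommGroup E] [Module ℝ E] [TopologicalSpace E] where
  act : G → E → E
  one_act : ∀ x, act 1 x = x
  mul_act : ∀ g h x, act (g * h) x = act g (act h x)
  continuous : Continuous fun p : G × E => act p.1 p.2
  affine : ∀ g (x y : E) (t : ℝ), 0 ≤ t → t ≤ 1 →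
    act g (t • x + (1 - t) • y) = t • act g x + (1 - t) • act g y

/-- A nonempty convex compact `G`-space: a nonempty convex compact subset of a Hausdorff
locally convex topological `ℝ`-vector space with a continuous affine `G`-action preserving it. -/
structure ConvexCompactSpaceOf (G : Type*) [Group G] [TopologicalSpace G] where
  E : Type
  [addCommGroup : AddCommGroup E]
  [module : Module ℝ E]
  [topology : TopologicalSpace E]
  [addGroupTop : IsTopologicalAddGroup E]
  [smulCont : ContinuousSMul ℝ E]
  [locConvex : LocallyConvexSpace ℝ E]
  [t2 : T2Space E]
  ρ : AffineActionOn G E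
  K : Set E
  compact : IsCompact K
  convex : Convex ℝ K
  nonempty : K.Nonempty
  invariant : ∀ g, ∀ x ∈ K, ρ.act g x ∈ K

attribute [instance] ConvexCompactSpaceOf.addCommGroup ConvexCompactSpaceOf.module
  ConvexCompactSpaceOf.topology ConvexCompactSpaceOf.addGroupTop ConvexCompactSpaceOf.smulCont
  ConvexCompactSpaceOf.locConvex ConvexCompactSpaceOf.t2

/-- `H < G` is relatively amenable: `H` fixes a point in every nonempty convex compact
`G`-space. -/
def RelativelyAmenable (G : Type*) [Group G] [TopologicalSpace G] (H : Subgroup G) : Prop :=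
  ∀ S : ConvexCompactSpaceOf G, ∃ x ∈ S.K, ∀ h ∈ H, S.ρ.act h x = x

/-- A topological group `L` is amenable: it fixes a point in every nonempty convex compact
`L`-space. -/
def TopAmenable (L : Type*) [Group L] [TopologicalSpace L] : Prop :=
  ∀ S : ConvexCompactSpaceOf L, ∃ x ∈ S.K, ∀ g : L, S.ρ.act g x = x

/-- `G` belongs to the class `𝒳`: every relatively amenable closed subgroup is amenable. -/
def MemClassX (G : Type*) [Group G] [TopologicalSpace G] : Prop :=
  ∀ H : Subgroup G, IsClosed (H : Set G) → RelativelyAmenable G H → TopAmenable H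

/-!
Let `H ≤ G` be closed and relatively amenable and let `S` be a convex compact `H`-space. Inducing
`G_i`-spaces up to `G` shows that `H ∩ G_i` is relatively amenable in the open subgroup `G_i`; it
is also closed, so it is amenable because `G_i` lies in `𝒳`, and its fixed points in `S` form a
nonempty compact set. These sets shrink along the directed family, so by compactness they have a
common point, which is fixed by `H = ⋃ (H ∩ G_i)`.
-/

namespace AffineActionOn

variable {G : Type*} [Group G] [TopologicalSpace G] {E : Type} [AddCommGroup E] [Module ℝ E]
  [TopologicalSpace E]

theorem act_act_eq_of_conj (ρ : AffineActionOn G E) {c k : G} {x : E}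
    (hx : ρ.act (c⁻¹ * k * c) x = x) : ρ.act k (ρ.act c x) = ρ.act c x := by
  rw [← ρ.mul_act]
  conv_rhs => rw [← hx, ← ρ.mul_act]
  group

end AffineActionOn

namespace ConvexCompactSpaceOf

def comap {M L : Type*} [Group M] [TopologicalSpace M] [Group L] [TopologicalSpace L]
    (S : ConvexCompactSpaceOf L) (φ : M →* L) (hφ : Continuous φ) : ConvexCompactSpaceOf M where
  E := S.E
  ρ :=
    { act := fun m => S.ρ.act (φ m)
      one_act := by simp [S.ρ.one_act]
      mul_act := by simp [S.ρ.mul_act]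
      continuous := S.ρ.continuous.comp ((hφ.comp continuous_fst).prodMk continuous_snd)
      affine := fun _ => S.ρ.affine _ }
  K := S.K
  compact := S.compact
  convex := S.convex
  nonempty := S.nonempty
  invariant := fun _ => S.invariant _

variable {L : Type*} [Group L] [TopologicalSpace L] (S : ConvexCompactSpaceOf L)

def fixedPoints (s : Set L) : Set S.E := S.K ∩ {x | ∀ g ∈ s, S.ρ.act g x = x}

theorem isClosed_fixedPoints (s : Set L) : IsClosed (S.fixedPoints s) := by
  simp only [fixedPoints, Set.ofPred_forall]
  exact S.compact.isClosed.inter <| isClosed_biInter fun g _ =>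
    isClosed_eq (S.ρ.continuous.comp (continuous_const.prodMk continuous_id)) continuous_id

theorem fixedPoints_anti {s t : Set L} (hst : s ⊆ t) : S.fixedPoints t ⊆ S.fixedPoints s :=
  fun _ hx => ⟨hx.1, fun g hg => hx.2 g (hst hg)⟩

theorem fixedPoints_nonempty_of_topAmenable {M : Type*} [Group M] [TopologicalSpace M]
    (hM : TopAmenable M) (φ : M →* L) (hφ : Continuous φ) {s : Set L} (hs : s ⊆ Set.range φ) :
    (S.fixedPoints s).Nonempty := by
  obtain ⟨x, hxK, hx⟩ := hM (S.comap φ hφ)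
  refine ⟨x, hxK, fun g hg => ?_⟩
  obtain ⟨m, rfl⟩ := hs hg
  exact hx m

theorem fixedPoints_iUnion_nonempty {ι : Type*} {s : ι → Set L} (hs : Directed (· ⊆ ·) s)
    (h : ∀ i, (S.fixedPoints (s i)).Nonempty) : (S.fixedPoints (⋃ i, s i)).Nonempty := by
  cases isEmpty_or_nonempty ι with
  | inl _ => simpa [fixedPoints] using S.nonempty
  | inr _ =>
    have hdir : Directed (· ⊇ ·) fun i => S.fixedPoints (s i) :=
      Directed.mono_comp (· ⊆ ·) (g := S.fixedPoints) (fun _ _ => S.fixedPoints_anti) hs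
    obtain ⟨x, hx⟩ := IsCompact.nonempty_iInter_of_directed_nonempty_isCompact_isClosed _ hdir h
      (fun i => S.compact.of_isClosed_subset (S.isClosed_fixedPoints _) Set.inter_subset_left)
      (fun i => S.isClosed_fixedPoints _)
    obtain ⟨i⟩ := ‹Nonempty ι›
    refine ⟨x, (Set.mem_iInter.1 hx i).1, fun g hg => ?_⟩
    obtain ⟨j, hj⟩ := Set.mem_iUnion.1 hg
    exact (Set.mem_iInter.1 hx j).2 g hj

end ConvexCompactSpaceOf

section Induction

variable {G : Type} [Group G] (N : Subgroup G)

theorem QuotientGroup.out_inv_mul_out_inv_smul_mem (g : G) (q : G ⧸ N) :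
    q.out⁻¹ * g * (g⁻¹ • q).out ∈ N := by
  obtain ⟨n, hn⟩ := QuotientGroup.mk_out_eq_mul N (g⁻¹ * q.out)
  rw [← QuotientGroup.out_eq' q, MulAction.Quotient.smul_mk, smul_eq_mul, QuotientGroup.out_eq',
    hn]
  simp [mul_assoc]

/-- The cocycle `G × G/N → N` of the section `Quotient.out` of `G → G/N`. -/
noncomputable def inducedCocycle (g : G) (q : G ⧸ N) : N :=
  ⟨q.out⁻¹ * g * (g⁻¹ • q).out, QuotientGroup.out_inv_mul_out_inv_smul_mem N g q⟩

theorem inducedCocycle_one (q : G ⧸ N) : inducedCocycle N 1 q = 1 := by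
  ext
  simp [inducedCocycle]

theorem inducedCocycle_mul (g h : G) (q : G ⧸ N) :
    inducedCocycle N (g * h) q = inducedCocycle N g q * inducedCocycle N h (g⁻¹ • q) := by
  ext
  simp only [inducedCocycle, Subgroup.coe_mul, mul_inv_rev, mul_smul]
  group

theorem inducedCocycle_of_inv_smul_eq {k : G} {q : G ⧸ N} (hq : k⁻¹ • q = q) :
    (inducedCocycle N k q : G) = q.out⁻¹ * k * q.out := by
  simp [inducedCocycle, hq]

variable [TopologicalSpace G] [IsTopologicalGroup G] {N}

theorem continuous_inducedCocycle (hN : IsOpen (N : Set G)) (q : G ⧸ N) :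
    Continuous fun g => inducedCocycle N g q := by
  have := QuotientGroup.discreteTopology hN
  have hsmul : Continuous fun g : G => g⁻¹ • q := by fun_prop
  exact Continuous.subtype_mk ((continuous_const.mul continuous_id).mul
    (continuous_of_discreteTopology.comp hsmul)) _

/-- The induced space: `N`-equivariant maps `G → T.E`, identified with maps `G ⧸ N → T.E` through
the section `Quotient.out`. Openness of `N` makes `G ⧸ N` discrete, whence continuity. -/
noncomputable def ConvexCompactSpaceOf.induced (hN : IsOpen (N : Set G))
    (T : ConvexCompactSpaceOf N) : ConvexCompactSpaceOf G where
  E := G ⧸ N → T.E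
  ρ :=
    { act := fun g F q => T.ρ.act (inducedCocycle N g q) (F (g⁻¹ • q))
      one_act := fun F => by
        funext q
        simp [inducedCocycle_one, T.ρ.one_act]
      mul_act := fun g h F => by
        funext q
        simp only [inducedCocycle_mul, T.ρ.mul_act, mul_inv_rev, mul_smul]
      continuous := by
        have := QuotientGroup.discreteTopology hN
        refine continuous_pi fun q => ?_
        have heval : Continuous fun p : (G ⧸ N) × (G ⧸ N → T.E) => p.2 p.1 :=
          continuous_prod_of_discrete_left.2 fun q => continuous_apply q
        exact T.ρ.continuous.comp (((continuous_inducedCocycle hN q).comp continuous_fst).prodMk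
          (heval.comp (((continuous_inv.smul continuous_const).comp continuous_fst).prodMk
            continuous_snd)))
      affine := fun g F F' t ht ht' => by
        funext q
        exact T.ρ.affine _ _ _ t ht ht' }
  K := Set.univ.pi fun _ => T.K
  compact := isCompact_univ_pi fun _ => T.compact
  convex := convex_pi fun _ _ => T.convex
  nonempty := Set.univ_pi_nonempty_iff.2 fun _ => T.nonempty
  invariant := fun g F hF q _ => T.invariant _ _ (hF _ (Set.mem_univ _))

/-- An `H`-fixed point of the induced space, evaluated at the trivial coset `q`, is fixed by the
conjugate `c⁻¹ (H ∩ N) c` with `c = q.out ∈ N`. -/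
theorem RelativelyAmenable.subgroupOf {H : Subgroup G} (hH : RelativelyAmenable G H)
    (hN : IsOpen (N : Set G)) : RelativelyAmenable N (H.subgroupOf N) := by
  intro T
  obtain ⟨F, hFK, hF⟩ := hH (T.induced hN)
  set q : G ⧸ N := QuotientGroup.mk 1
  have hc : q.out ∈ N := by simpa using QuotientGroup.eq.1 (QuotientGroup.out_eq' q)
  refine ⟨T.ρ.act ⟨q.out, hc⟩ (F q), T.invariant _ _ (hFK q trivial), fun k hk => ?_⟩
  have hkq : (k : G)⁻¹ • q = q := by simp [q, QuotientGroup.eq]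
  have hFq : T.ρ.act (inducedCocycle N k q) (F ((k : G)⁻¹ • q)) = F q := congrFun (hF k hk) q
  rw [hkq] at hFq
  refine T.ρ.act_act_eq_of_conj (Eq.trans ?_ hFq)
  congr 1
  ext
  simp [inducedCocycle_of_inv_smul_eq N hkq]

end Induction

theorem TopAmenable.fixedPoints_subgroupOf_nonempty {G : Type} [Group G] [TopologicalSpace G]
    {H N : Subgroup G} (hHN : TopAmenable (H.subgroupOf N)) (S : ConvexCompactSpaceOf H) :
    (S.fixedPoints {h | (h : G) ∈ N}).Nonempty :=
  S.fixedPoints_nonempty_of_topAmenable hHN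
    ((N.subtype.comp (H.subgroupOf N).subtype).codRestrict H fun x => x.2)
    ((continuous_subtype_val.comp continuous_subtype_val).subtype_mk _)
    fun h hh => ⟨⟨⟨h, hh⟩, h.2⟩, rfl⟩

theorem memClassX_of_directed_union_of_open_general
    {G : Type} [Group G] [TopologicalSpace G] [IsTopologicalGroup G]
    {ι : Type} (Gi : ι → Subgroup G)
    (hdir : Directed (· ≤ ·) Gi)
    (hopen : ∀ i, IsOpen (Gi i : Set G))
    (hunion : ∀ g : G, ∃ i, g ∈ Gi i)
    (hX : ∀ i, MemClassX (Gi i)) : MemClassX G := by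
  intro H hH hrel S
  have hdirH : Directed (· ⊆ ·) fun i => {h : H | (h : G) ∈ Gi i} :=
    Directed.mono_comp (· ≤ ·) (g := fun K : Subgroup G => {h : H | (h : G) ∈ K})
      (fun _ _ hle _ hh => hle hh) hdir
  have hfix i : (S.fixedPoints {h : H | (h : G) ∈ Gi i}).Nonempty :=
    (hX i _ (hH.preimage continuous_subtype_val)
      (hrel.subgroupOf (hopen i))).fixedPoints_subgroupOf_nonempty S
  obtain ⟨x, hxK, hx⟩ := S.fixedPoints_iUnion_nonempty hdirH hfix
  exact ⟨x, hxK, fun h => hx h (Set.mem_iUnion.2 (hunion h))⟩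

/-- If a locally compact group `G` is the union of a directed family of open subgroups, each
belonging to the class `𝒳`, then `G` belongs to `𝒳`. -/
theorem memClassX_of_directed_union_of_open
    {G : Type} [Group G] [TopologicalSpace G] [IsTopologicalGroup G] [LocallyCompactSpace G]
    {ι : Type} (Gi : ι → Subgroup G)
    (hdir : Directed (· ≤ ·) Gi)
    (hopen : ∀ i, IsOpen (Gi i : Set G))
    (hunion : ∀ g : G, ∃ i, g ∈ Gi i)
    (hX : ∀ i, MemClassX (Gi i)) : MemClassX G :=
  memClassX_of_directed_union_of_open_general Gi hdir hopen hunion hX
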